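/- arXiv:2012.14923 — 2 statements merged into one kernel-verified Lean document; each statement's English description precedes it below -/
import Mathlib

section
/- In Aut(F_n), for distinct indices i ≠ j, one has w_{a_i a_j} = w_{a_i⁻¹ a_j⁻¹}, i.e., E_{a_j a_i}·E_{a_i⁻¹ a_j}·E_{a_j⁻¹ a_i⁻¹} = E_{a_j⁻¹ a_i⁻¹}·E_{a_i a_j⁻¹}·E_{a_j a_i}. -/
/-!
With `x = aᵢ^{±1}` and `y = aⱼ^{±1}`, the product `w_{xy} = E_{yx} E_{x⁻¹y} E_{y⁻¹x⁻¹}` sends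
`x ↦ y⁻¹`, `y ↦ x` and fixes the other basis elements, as one checks on generators. An
automorphism with this behaviour on `x, y` behaves the same way on `x⁻¹, y⁻¹`, so
`w_{aᵢ aⱼ}` and `w_{aᵢ⁻¹ aⱼ⁻¹}` agree on every generator of the free group.
-/

open FreeGroup

/-- `IsNielsen e i bi j bj` says `e` is the Nielsen automorphism `E_{x y}` of the free
group `F_n = FreeGroup (Fin n)`, where `x = aᵢ` if `bi = true` and `x = aᵢ⁻¹` otherwise,
and `y = aⱼ` if `bj = true` and `y = aⱼ⁻¹` otherwise: it sends `x ↦ x * y`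
(equivalently, for `x = aᵢ⁻¹` it sends `aᵢ ↦ y⁻¹ * aᵢ`) and fixes all basis elements
other than `aᵢ`. -/
def IsNielsen {n : ℕ} (e : MulAut (FreeGroup (Fin n)))
    (i : Fin n) (bi : Bool) (j : Fin n) (bj : Bool) : Prop :=
  (if bi then e (of i) = of i * (if bj then of j else (of j)⁻¹)
   else e (of i) = (if bj then of j else (of j)⁻¹)⁻¹ * of i) ∧
  ∀ k : Fin n, k ≠ i → e (of k) = of k

namespace FreeGroup

variable {α : Type*}

theorem mk_singleton (a : α) (b : Bool) : mk [(a, b)] = if b then of a else (of a)⁻¹ := by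
  cases b <;> simp [of, inv_mk, invRev]

theorem mk_singleton_not (a : α) (b : Bool) : mk [(a, !b)] = (mk [(a, b)])⁻¹ := by
  cases b <;> simp [mk_singleton]

theorem apply_of_eq_of_apply_mk_singleton_eq {M F : Type*} [Group M] [FunLike F (FreeGroup α) M]
    [MonoidHomClass F (FreeGroup α) M] {f g : F} {a : α} {b : Bool}
    (h : f (mk [(a, b)]) = g (mk [(a, b)])) : f (of a) = g (of a) := by
  cases b
  · simpa [mk_singleton] using h
  · exact h

end FreeGroup

theorem MulAut.freeGroup_ext {α : Type*} {e f : MulAut (FreeGroup α)}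
    (h : ∀ a, e (of a) = f (of a)) : e = f :=
  MulEquiv.toMonoidHom_injective (ext_hom _ _ h)

namespace IsNielsen

variable {n : ℕ} {e : MulAut (FreeGroup (Fin n))} {i j : Fin n} {bi bj : Bool}

theorem apply_mk_singleton (h : IsNielsen e i bi j bj) :
    e (mk [(i, bi)]) = mk [(i, bi)] * mk [(j, bj)] := by
  obtain ⟨hi, -⟩ := h
  cases bi <;> cases bj <;> simp_all [mk_singleton]

theorem apply_mk_singleton_not (h : IsNielsen e i bi j bj) :
    e (mk [(i, !bi)]) = mk [(j, !bj)] * mk [(i, !bi)] := by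
  rw [mk_singleton_not, mk_singleton_not, _root_.map_inv, h.apply_mk_singleton, mul_inv_rev]

theorem apply_mk_singleton_of_ne (h : IsNielsen e i bi j bj) {k : Fin n} (hk : k ≠ i)
    (b : Bool) : e (mk [(k, b)]) = mk [(k, b)] := by
  cases b <;> simp [mk_singleton, h.2 k hk]

end IsNielsen

/-- The letters `mk [(i, b)]`, `mk [(j, c)]` are `aᵢ^{±1}`, `aⱼ^{±1}`; on the abelianization such
an `e` is a rotation by a right angle. -/
def IsQuarterTurn {α : Type*} (e : MulAut (FreeGroup α)) (i : α) (b : Bool) (j : α) (c : Bool) :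
    Prop :=
  e (mk [(i, b)]) = (mk [(j, c)])⁻¹ ∧ e (mk [(j, c)]) = mk [(i, b)] ∧
    ∀ k, k ≠ i → k ≠ j → e (of k) = of k

namespace IsQuarterTurn

variable {α : Type*} {e f : MulAut (FreeGroup α)} {i j : α} {b c : Bool}

theorem not_not (h : IsQuarterTurn e i b j c) : IsQuarterTurn e i (!b) j (!c) := by
  obtain ⟨hi, hj, hk⟩ := h
  exact ⟨by rw [mk_singleton_not, mk_singleton_not, _root_.map_inv, hi],
    by rw [mk_singleton_not, mk_singleton_not, _root_.map_inv, hj], hk⟩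

theorem ext (he : IsQuarterTurn e i b j c) (hf : IsQuarterTurn f i b j c) : e = f := by
  refine MulAut.freeGroup_ext fun k => ?_
  by_cases hki : k = i
  · subst hki
    exact apply_of_eq_of_apply_mk_singleton_eq (he.1.trans hf.1.symm)
  by_cases hkj : k = j
  · subst hkj
    exact apply_of_eq_of_apply_mk_singleton_eq (he.2.1.trans hf.2.1.symm)
  rw [he.2.2 k hki hkj, hf.2.2 k hki hkj]

end IsQuarterTurn

/-- `C * B * A` is `w_{xy} = E_{yx} E_{x⁻¹y} E_{y⁻¹x⁻¹}` for `x = mk [(i, b)]`, `y = mk [(j, c)]`. -/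
theorem isQuarterTurn_nielsen_mul_mul {n : ℕ} {i j : Fin n} (hij : i ≠ j) {b c : Bool}
    {A B C : MulAut (FreeGroup (Fin n))}
    (hA : IsNielsen A j c i b) (hB : IsNielsen B i (!b) j c) (hC : IsNielsen C j (!c) i (!b)) :
    IsQuarterTurn (C * B * A) i b j c := by
  unfold IsQuarterTurn
  set x := mk [(i, b)]
  set y := mk [(j, c)]
  have hAx : A x = x := hA.apply_mk_singleton_of_ne hij b
  have hAy : A y = y * x := hA.apply_mk_singleton
  have hBx : B x = y⁻¹ * x := by
    simpa only [Bool.not_not, mk_singleton_not] using hB.apply_mk_singleton_not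
  have hBy : B y = y := hB.apply_mk_singleton_of_ne hij.symm c
  have hCx : C x = x := hC.apply_mk_singleton_of_ne hij b
  have hCy : C y = x * y := by
    simpa only [Bool.not_not, mk_singleton_not] using hC.apply_mk_singleton_not
  refine ⟨?_, ?_, fun k hki hkj => ?_⟩
  · simp only [MulAut.mul_apply, hAx, hBx, _root_.map_mul, _root_.map_inv, hCx, hCy]
    group
  · rw [MulAut.mul_apply, MulAut.mul_apply, hAy, _root_.map_mul, hBy, hBx, mul_inv_cancel_left,
      hCx]
  · simp only [MulAut.mul_apply, hA.2 k hkj, hB.2 k hki, hC.2 k hkj]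

/-- For `i ≠ j`, `w_{aᵢ aⱼ} = w_{aᵢ⁻¹ aⱼ⁻¹}`, i.e.
`E_{aⱼaᵢ} · E_{aᵢ⁻¹aⱼ} · E_{aⱼ⁻¹aᵢ⁻¹} = E_{aⱼ⁻¹aᵢ⁻¹} · E_{aᵢaⱼ⁻¹} · E_{aⱼaᵢ}`
(products composed left to right; in Lean the factors appear in reverse order). -/
theorem w_eq_w_inv {n : ℕ} (i j : Fin n) (hij : i ≠ j)
    (A B C D : MulAut (FreeGroup (Fin n)))
    (hA : IsNielsen A j true i true)    -- E_{aⱼ aᵢ}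
    (hB : IsNielsen B i false j true)   -- E_{aᵢ⁻¹ aⱼ}
    (hC : IsNielsen C j false i false)  -- E_{aⱼ⁻¹ aᵢ⁻¹}
    (hD : IsNielsen D i true j false)   -- E_{aᵢ aⱼ⁻¹}
    :
    C * B * A = A * D * C := by
  have hw : IsQuarterTurn (C * B * A) i true j true := isQuarterTurn_nielsen_mul_mul hij hA hB hC
  have hw' : IsQuarterTurn (A * D * C) i false j false :=
    isQuarterTurn_nielsen_mul_mul hij hC hD hA
  exact hw.ext hw'.not_not
end

section
/- In Aut(F_n), for pairwise distinct indices i, j, k, conjugation by w_{a_1 a_j} transforms E_{a_1⁻¹ a_k} into E_{a_j a_k}: w_{a_1 a_j}⁻¹ · E_{a_1⁻¹ a_k} · w_{a_1 a_j} = E_{a_j a_k} (left-to-right composition). -/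
open FreeGroup

/-!
The automorphism `w_{a₁aⱼ}` is the signed transposition
`a₁ ↦ aⱼ⁻¹, aⱼ ↦ a₁` fixing the other generators. Conjugating a Nielsen automorphism
`E_{xy}` by a signed permutation `σ` of the basis gives `E_{σx σy}`, and here
`σ(a₁⁻¹) = aⱼ`, `σ(aₖ) = aₖ`. A Nielsen automorphism is determined by `x` and `y`.
-/

namespace FreeGroup

variable {α : Type*}

def signedOf (i : α) (b : Bool) : FreeGroup α := if b then of i else (of i)⁻¹

@[simp] lemma signedOf_true (i : α) : signedOf i true = of i := rfl

@[simp] lemma signedOf_false (i : α) : signedOf i false = (of i)⁻¹ := rfl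

lemma mulAut_ext {σ τ : MulAut (FreeGroup α)} (h : ∀ i, σ (of i) = τ (of i)) : σ = τ :=
  MulEquiv.toMonoidHom_injective (ext_hom _ _ h)

def IsSignedPerm (σ : MulAut (FreeGroup α)) (π : Equiv.Perm α) (ε : α → Bool) : Prop :=
  ∀ p, σ (of p) = signedOf (π p) (ε p)

namespace IsSignedPerm

variable {σ : MulAut (FreeGroup α)} {π : Equiv.Perm α} {ε : α → Bool}

lemma apply_signedOf (h : IsSignedPerm σ π ε) (p : α) (b : Bool) :
    σ (signedOf p b) = signedOf (π p) (b == ε p) := by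
  cases b <;> cases hε : ε p <;> simp [h p, hε]

lemma inv_apply_of (h : IsSignedPerm σ π ε) (p : α) :
    σ⁻¹ (of (π p)) = signedOf p (ε p) := by
  rw [MulAut.inv_apply, MulEquiv.symm_apply_eq, h.apply_signedOf, beq_self_eq_true,
    signedOf_true]

end IsSignedPerm

end FreeGroup

namespace IsNielsen

variable {n : ℕ} {e e' : MulAut (FreeGroup (Fin n))} {i j : Fin n} {bi bj : Bool}

lemma iff_signedOf :
    IsNielsen e i bi j bj ↔
      e (signedOf i bi) = signedOf i bi * signedOf j bj ∧ ∀ k, k ≠ i → e (of k) = of k := by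
  unfold IsNielsen signedOf
  cases bi <;> cases bj <;> simp [inv_eq_iff_eq_inv]

lemma apply_signedOf_of_ne (h : IsNielsen e i bi j bj) {k : Fin n} (hk : k ≠ i) (b : Bool) :
    e (signedOf k b) = signedOf k b := by
  cases b <;> simp [h.2 k hk]

lemma unique (h : IsNielsen e i bi j bj) (h' : IsNielsen e' i bi j bj) : e = e' := by
  refine mulAut_ext fun k => ?_
  obtain rfl | hk := eq_or_ne k i
  · have hi := (iff_signedOf.1 h).1.trans (iff_signedOf.1 h').1.symm
    cases bi <;> simpa using hi
  · rw [h.2 k hk, h'.2 k hk]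

lemma conj {σ : MulAut (FreeGroup (Fin n))} {π : Equiv.Perm (Fin n)} {ε : Fin n → Bool}
    (h : IsNielsen e i bi j bj) (hσ : IsSignedPerm σ π ε) :
    IsNielsen (σ * e * σ⁻¹) (π i) (bi == ε i) (π j) (bj == ε j) := by
  rw [iff_signedOf] at h ⊢
  refine ⟨?_, fun k hk => ?_⟩
  · rw [← hσ.apply_signedOf, MulAut.mul_apply, MulAut.mul_apply, MulAut.inv_apply_self, h.1,
      _root_.map_mul, hσ.apply_signedOf, hσ.apply_signedOf]
  · obtain ⟨p, rfl⟩ := π.surjective k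
    have hp : p ≠ i := by rintro rfl; exact hk rfl
    rw [MulAut.mul_apply, MulAut.mul_apply, hσ.inv_apply_of,
      (iff_signedOf.2 h).apply_signedOf_of_ne hp, hσ.apply_signedOf, beq_self_eq_true,
      signedOf_true]

end IsNielsen

lemma isSignedPerm_mul_mul_of_isNielsen {n : ℕ} {i j : Fin n} (hij : i ≠ j)
    {E₁ E₂ E₃ : MulAut (FreeGroup (Fin n))}
    (h₁ : IsNielsen E₁ j true i true) (h₂ : IsNielsen E₂ i false j true)
    (h₃ : IsNielsen E₃ j false i false) :
    IsSignedPerm (E₃ * E₂ * E₁) (Equiv.swap i j) (· != i) := by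
  intro p
  obtain ⟨h₁j, h₁⟩ := h₁
  obtain ⟨h₂i, h₂⟩ := h₂
  obtain ⟨h₃j, h₃⟩ := h₃
  simp only [if_true, Bool.false_eq_true, if_false, inv_inv] at h₁j h₂i h₃j
  simp only [MulAut.mul_apply]
  obtain rfl | hpi := eq_or_ne i p
  · rw [h₁ i hij, h₂i, _root_.map_mul, _root_.map_inv, h₃j, h₃ i hij]
    simp only [mul_inv_rev, inv_mul_cancel_right, Equiv.swap_apply_left, bne_self_eq_false,
      signedOf_false]
  obtain rfl | hpj := eq_or_ne j p
  · rw [h₁j, _root_.map_mul, h₂ j hij.symm, h₂i, mul_inv_cancel_left, h₃ i hij,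
      Equiv.swap_apply_right, bne_iff_ne.2 hij.symm, signedOf_true]
  · rw [h₁ p hpj.symm, h₂ p hpi.symm, h₃ p hpj.symm,
      Equiv.swap_apply_of_ne_of_ne hpi.symm hpj.symm, bne_iff_ne.2 hpi.symm, signedOf_true]

/-- For distinct `j, k ≥ 2` (here indices `≠ 0`, with `a₁ = of 0`), conjugation by
`w_{a₁ aⱼ}` transforms `E_{a₁⁻¹ aₖ}` into `E_{aⱼ aₖ}`:
`w_{a₁aⱼ}⁻¹ · E_{a₁⁻¹aₖ} · w_{a₁aⱼ} = E_{aⱼaₖ}` with left-to-right composition, i.e. in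
Lean `w * E_{a₁⁻¹aₖ} * w⁻¹ = E_{aⱼaₖ}` where `w = E₃ * E₂ * E₁` is `w_{a₁aⱼ}`. -/
theorem w_conj_nielsen {m : ℕ} (j k : Fin (m + 3))
    (hj : j ≠ 0) (hk : k ≠ 0) (hjk : j ≠ k)
    (E₁ E₂ E₃ Ek Ejk : MulAut (FreeGroup (Fin (m + 3))))
    (h₁ : IsNielsen E₁ j true 0 true)     -- E_{aⱼ a₁}
    (h₂ : IsNielsen E₂ 0 false j true)    -- E_{a₁⁻¹ aⱼ}
    (h₃ : IsNielsen E₃ j false 0 false)   -- E_{aⱼ⁻¹ a₁⁻¹}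
    (hEk : IsNielsen Ek 0 false k true)   -- E_{a₁⁻¹ aₖ}
    (hEjk : IsNielsen Ejk j true k true)  -- E_{aⱼ aₖ}
    :
    (E₃ * E₂ * E₁) * Ek * (E₃ * E₂ * E₁)⁻¹ = Ejk := by
  have hw := isSignedPerm_mul_mul_of_isNielsen hj.symm h₁ h₂ h₃
  have hconj := hEk.conj hw
  simp only [Equiv.swap_apply_left, Equiv.swap_apply_of_ne_of_ne hk hjk.symm, bne_self_eq_false,
    bne_iff_ne.2 hk, beq_self_eq_true] at hconj
  exact hconj.unique hEjk
end
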